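/- arXiv:1208.2192 — 6 statements merged into one kernel-verified Lean document; each statement's English description precedes it below -/
import Mathlib

section
/- For every natural number n ≥ 1, the sum ∑_{j=1}^{n} √(j/n) is strictly less than 1 + 2n/3. -/
lemma sqrt_step (x : ℝ) (hx : 0 ≤ x) :
    Real.sqrt x + 2/3 * (x * Real.sqrt x) ≤ 2/3 * ((x+1) * Real.sqrt (x+1)) := by
  have hs := Real.sqrt_nonneg x
  have ht := Real.sqrt_nonneg (x+1)
  have hs2 : Real.sqrt x ^ 2 = x := Real.sq_sqrt hx
  have ht2 : Real.sqrt (x+1) ^ 2 = x + 1 := Real.sq_sqrt (by linarith)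
  have hts : Real.sqrt x ≤ Real.sqrt (x+1) := Real.sqrt_le_sqrt (by linarith)
  nlinarith [sq_nonneg (Real.sqrt (x+1) - Real.sqrt x),
    sq_nonneg (Real.sqrt (x+1) + Real.sqrt x),
    mul_nonneg hs ht, mul_nonneg (mul_nonneg hs hs) ht,
    mul_nonneg (sub_nonneg.2 hts) (mul_nonneg hs hs)]

lemma sum_sqrt_le (n : ℕ) (hn : 1 ≤ n) :
    ∑ j ∈ Finset.Icc 1 n, Real.sqrt (j : ℝ) ≤
      Real.sqrt n + 2/3 * ((n : ℝ) * Real.sqrt n - 1) := by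
  induction n, hn using Nat.le_induction with
  | base => simp
  | succ n hn ih =>
    rw [Finset.sum_Icc_succ_top (by omega)]
    have key := sqrt_step (n : ℝ) (by positivity)
    push_cast at *
    linarith

theorem sum_sqrt_lt (n : ℕ) (hn : 1 ≤ n) :
    ∑ j ∈ Finset.Icc 1 n, Real.sqrt ((j : ℝ) / n) < 1 + 2 * (n : ℝ) / 3 := by
  have hn0 : (0 : ℝ) < n := by positivity
  have hsn : (0 : ℝ) < Real.sqrt n := Real.sqrt_pos.2 hn0
  have hrw : ∀ j ∈ Finset.Icc 1 n, Real.sqrt ((j : ℝ) / n) = Real.sqrt j / Real.sqrt n := by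
    intro j _
    exact Real.sqrt_div (by positivity) _
  rw [Finset.sum_congr rfl hrw, ← Finset.sum_div, div_lt_iff₀ hsn]
  have h := sum_sqrt_le n hn
  have : (1 + 2 * (n : ℝ) / 3) * Real.sqrt n = Real.sqrt n + 2/3 * ((n : ℝ) * Real.sqrt n) := by
    ring
  linarith
end

section
/- For all real numbers α and β, |⁴√(1+α²) − ⁴√(1+β²)| ≤ |α − β|. -/
theorem fourth_root_diff_le (α β : ℝ) :
    |(1 + α ^ 2) ^ ((1 : ℝ) / 4) - (1 + β ^ 2) ^ ((1 : ℝ) / 4)| ≤ |α - β| := by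
  set a := (1 + α ^ 2) ^ ((1 : ℝ) / 4) with ha_def
  set b := (1 + β ^ 2) ^ ((1 : ℝ) / 4) with hb_def
  have hα0 : (0:ℝ) ≤ 1 + α ^ 2 := by positivity
  have hβ0 : (0:ℝ) ≤ 1 + β ^ 2 := by positivity
  have ha1 : (1:ℝ) ≤ a := Real.one_le_rpow (by nlinarith [sq_nonneg α]) (by norm_num)
  have hb1 : (1:ℝ) ≤ b := Real.one_le_rpow (by nlinarith [sq_nonneg β]) (by norm_num)
  have ha4 : a ^ 4 = 1 + α ^ 2 := by
    rw [ha_def, ← Real.rpow_natCast ((1 + α ^ 2) ^ ((1:ℝ)/4)) 4, ← Real.rpow_mul hα0]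
    norm_num
  have hb4 : b ^ 4 = 1 + β ^ 2 := by
    rw [hb_def, ← Real.rpow_natCast ((1 + β ^ 2) ^ ((1:ℝ)/4)) 4, ← Real.rpow_mul hβ0]
    norm_num
  have hαa : |α| ≤ a ^ 2 := by
    nlinarith [sq_abs α, abs_nonneg α, sq_nonneg (a^2 - |α|), sq_nonneg a]
  have hβb : |β| ≤ b ^ 2 := by
    nlinarith [sq_abs β, abs_nonneg β, sq_nonneg (b^2 - |β|), sq_nonneg b]
  have hkey : (a - b) * ((a + b) * (a ^ 2 + b ^ 2)) = (α - β) * (α + β) := by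
    linear_combination ha4 - hb4
  have hK : (1:ℝ) ≤ (a + b) * (a ^ 2 + b ^ 2) := by nlinarith
  have hab : (α + β) ^ 2 ≤ (a ^ 2 + b ^ 2) ^ 2 := by
    nlinarith [le_abs_self α, neg_abs_le α, le_abs_self β, neg_abs_le β,
      abs_nonneg α, abs_nonneg β]
  rw [← Real.sqrt_sq_eq_abs, ← Real.sqrt_sq_eq_abs]
  apply Real.sqrt_le_sqrt
  have hK2 : (0:ℝ) < ((a + b) * (a ^ 2 + b ^ 2)) ^ 2 := by positivity
  have h2 : ((a - b) * ((a + b) * (a ^ 2 + b ^ 2))) ^ 2 = ((α - β) * (α + β)) ^ 2 := by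
    rw [hkey]
  have hq : (a^2+b^2)^2 ≤ ((a+b)*(a^2+b^2))^2 := by
    have h1 : (1:ℝ) ≤ (a+b)^2 := by nlinarith
    have := mul_le_mul_of_nonneg_right h1 (sq_nonneg (a^2+b^2))
    calc (a^2+b^2)^2 ≤ (a+b)^2 * (a^2+b^2)^2 := by linarith
      _ = ((a+b)*(a^2+b^2))^2 := by ring
  have step1 : (a - b) ^ 2 * ((a + b) * (a ^ 2 + b ^ 2)) ^ 2
      ≤ (α - β) ^ 2 * ((a + b) * (a ^ 2 + b ^ 2)) ^ 2 := by
    have e1 : (a - b) ^ 2 * ((a + b) * (a ^ 2 + b ^ 2)) ^ 2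
        = (α - β) ^ 2 * (α + β) ^ 2 := by
      linear_combination h2
    rw [e1]
    have t1 : (α - β) ^ 2 * (α + β) ^ 2 ≤ (α - β) ^ 2 * (a ^ 2 + b ^ 2) ^ 2 :=
      mul_le_mul_of_nonneg_left hab (sq_nonneg _)
    have t2 : (α - β) ^ 2 * (a ^ 2 + b ^ 2) ^ 2
        ≤ (α - β) ^ 2 * ((a + b) * (a ^ 2 + b ^ 2)) ^ 2 :=
      mul_le_mul_of_nonneg_left hq (sq_nonneg _)
    linarith
  exact le_of_mul_le_mul_right (by linarith [step1]) hK2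
end

section
/- For all real numbers α and β, |(1+iα)/⁴√(1+α²) − (1+iβ)/⁴√(1+β²)| ≤ √2 · |α − β|. -/
/-!
Write the left-hand side as `f α - f β` with `f x = (1 + x i) (1 + x²)^(-1/4)`. Then
`f' x = (-x/2 + (1 + x²/2) i) (1 + x²)^(-5/4)`, and since
`|-x/2 + (1 + x²/2) i| ≤ 1 + x²`, `|f' x| ≤ (1 + x²)^(-1/4) ≤ 1`. The mean value inequality makes `f` 1-Lipschitz, and `1 ≤ √2`.
-/

open Complex

noncomputable def fourthRootScaled (x : ℝ) : ℂ :=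
  (1 + x * I) * (((1 + x ^ 2) ^ (-(1 / 4 : ℝ)) : ℝ) : ℂ)

theorem fourthRootScaled_eq_div (x : ℝ) :
    fourthRootScaled x = (1 + x * I) / (((1 + x ^ 2) ^ ((1 : ℝ) / 4) : ℝ) : ℂ) := by
  rw [fourthRootScaled, Real.rpow_neg (by positivity), ofReal_inv, ← div_eq_mul_inv]

theorem rpow_neg_quarter_eq_mul_rpow_neg_five_quarters {a : ℝ} (ha : 0 ≤ a) :
    a ^ (-(1 / 4 : ℝ)) = a * a ^ (-(5 / 4 : ℝ)) := by
  rw [← Real.rpow_one_add' ha (by norm_num)]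
  norm_num

theorem hasDerivAt_fourthRootScaled (x : ℝ) :
    HasDerivAt fourthRootScaled
      ((-(x / 2) + (1 + x ^ 2 / 2) * I) * (((1 + x ^ 2) ^ (-(5 / 4 : ℝ)) : ℝ) : ℂ)) x := by
  have hpos : 0 < 1 + x ^ 2 := by positivity
  have hline : HasDerivAt (fun y : ℝ => 1 + y * I) I x := by
    simpa using ((ofRealCLM.hasDerivAt (x := x)).mul_const I).const_add 1
  have hpow : HasDerivAt (fun y : ℝ => (1 + y ^ 2) ^ (-(1 / 4 : ℝ)))
      (2 * x * (-(1 / 4 : ℝ)) * (1 + x ^ 2) ^ (-(5 / 4 : ℝ))) x := by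
    convert ((hasDerivAt_pow 2 x).const_add 1).rpow_const (p := -(1 / 4 : ℝ)) (Or.inl hpos.ne')
      using 2 <;> norm_num
  refine (hline.mul hpow.ofReal_comp).congr_deriv ?_
  rw [rpow_neg_quarter_eq_mul_rpow_neg_five_quarters hpos.le]
  push_cast
  ring

theorem norm_deriv_fourthRootScaled_le_one (x : ℝ) :
    ‖(-(x / 2) + (1 + x ^ 2 / 2) * I) * (((1 + x ^ 2) ^ (-(5 / 4 : ℝ)) : ℝ) : ℂ)‖ ≤ 1 := by
  have hpos : 0 < 1 + x ^ 2 := by positivity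
  have hnum : ‖-(x / 2) + (1 + x ^ 2 / 2) * I‖ ≤ 1 + x ^ 2 := by
    have : -(x / 2 : ℂ) + (1 + x ^ 2 / 2) * I = ⟨-(x / 2), 1 + x ^ 2 / 2⟩ := by
      apply Complex.ext <;> simp [sq]
    rw [this, norm_def, normSq_mk, Real.sqrt_le_left hpos.le]
    nlinarith [sq_nonneg x]
  calc _ = ‖-(x / 2) + (1 + x ^ 2 / 2) * I‖ * (1 + x ^ 2) ^ (-(5 / 4 : ℝ)) := by
        rw [norm_mul, norm_real, Real.norm_of_nonneg (by positivity)]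
    _ ≤ (1 + x ^ 2) * (1 + x ^ 2) ^ (-(5 / 4 : ℝ)) := by gcongr
    _ = (1 + x ^ 2) ^ (-(1 / 4 : ℝ)) :=
        (rpow_neg_quarter_eq_mul_rpow_neg_five_quarters hpos.le).symm
    _ ≤ 1 := Real.rpow_le_one_of_one_le_of_nonpos (by nlinarith [sq_nonneg x]) (by norm_num)

theorem norm_fourthRootScaled_sub_le (α β : ℝ) :
    ‖fourthRootScaled α - fourthRootScaled β‖ ≤ |α - β| := by
  simpa using convex_univ.norm_image_sub_le_of_norm_hasDerivWithin_le
    (fun x _ => (hasDerivAt_fourthRootScaled x).hasDerivWithinAt)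
    (fun x _ => norm_deriv_fourthRootScaled_le_one x) (Set.mem_univ β) (Set.mem_univ α)

open Complex in
theorem complex_fourth_root_diff_le (α β : ℝ) :
    ‖(1 + α * I) / (((1 + α ^ 2) ^ ((1 : ℝ) / 4) : ℝ) : ℂ) -
      (1 + β * I) / (((1 + β ^ 2) ^ ((1 : ℝ) / 4) : ℝ) : ℂ)‖ ≤ Real.sqrt 2 * |α - β| := by
  rw [← fourthRootScaled_eq_div, ← fourthRootScaled_eq_div]
  calc _ ≤ |α - β| := norm_fourthRootScaled_sub_le α β
    _ ≤ Real.sqrt 2 * |α - β| :=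
        le_mul_of_one_le_left (abs_nonneg _) (Real.one_le_sqrt.mpr one_le_two)
end

section
/- Let M be a real number and p : ℝ → ℝ be differentiable with ‖p'‖∞ ≤ K for some K ≥ 0. Define h(x) = (1 + (M·sign(x) + p'(x))²)^{1/2} where for x < 0 the derivative of M|x| is −M and for x > 0 it is +M. Then for all x < 0 < y, |h(x)^{1/2} − h(y)^{1/2}| ≤ K. -/
lemma quarter_pow_sq (u : ℝ) : ((1 + u ^ 2) ^ ((1:ℝ)/4)) ^ 4 = 1 + u ^ 2 := by
  have h : (0:ℝ) ≤ 1 + u ^ 2 := by positivity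
  rw [← Real.rpow_natCast ((1 + u ^ 2) ^ ((1:ℝ)/4)) 4, ← Real.rpow_mul h]
  norm_num

lemma quarter_ge_one (u : ℝ) : 1 ≤ (1 + u ^ 2) ^ ((1:ℝ)/4) := by
  rw [show ((1:ℝ)/4) = ((4:ℝ)⁻¹) by norm_num]
  exact Real.one_le_rpow (by nlinarith [sq_nonneg u]) (by norm_num)

lemma quarter_sq_ge (u : ℝ) : |u| ≤ ((1 + u ^ 2) ^ ((1:ℝ)/4)) ^ 2 := by
  have h : (0:ℝ) ≤ 1 + u ^ 2 := by positivity
  have : ((1 + u ^ 2) ^ ((1:ℝ)/4)) ^ 2 = (1 + u ^ 2) ^ ((1:ℝ)/2) := by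
    rw [← Real.rpow_natCast ((1 + u ^ 2) ^ ((1:ℝ)/4)) 2, ← Real.rpow_mul h]
    norm_num
  rw [this]
  have h1 : |u| = (u ^ 2) ^ ((1:ℝ)/2) := by
    rw [← Real.sqrt_eq_rpow, Real.sqrt_sq_eq_abs]
  rw [h1]
  exact Real.rpow_le_rpow (by positivity) (by linarith) (by norm_num)

lemma quarter_lip (u v : ℝ) :
    |(1 + u ^ 2) ^ ((1:ℝ)/4) - (1 + v ^ 2) ^ ((1:ℝ)/4)| ≤ |u - v| / 2 := by
  set A := (1 + u ^ 2) ^ ((1:ℝ)/4) with hA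
  set B := (1 + v ^ 2) ^ ((1:ℝ)/4) with hB
  have hA1 : 1 ≤ A := quarter_ge_one u
  have hB1 : 1 ≤ B := quarter_ge_one v
  have hA4 : A ^ 4 = 1 + u ^ 2 := quarter_pow_sq u
  have hB4 : B ^ 4 = 1 + v ^ 2 := quarter_pow_sq v
  have hAu : |u| ≤ A ^ 2 := quarter_sq_ge u
  have hBv : |v| ≤ B ^ 2 := quarter_sq_ge v
  have hpos : 0 < (A + B) * (A ^ 2 + B ^ 2) := by nlinarith
  have key : |A - B| * ((A + B) * (A ^ 2 + B ^ 2)) = |u ^ 2 - v ^ 2| := by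
    have : (A - B) * ((A + B) * (A ^ 2 + B ^ 2)) = A ^ 4 - B ^ 4 := by ring
    calc |A - B| * ((A + B) * (A ^ 2 + B ^ 2))
        = |(A - B) * ((A + B) * (A ^ 2 + B ^ 2))| := by
          rw [abs_mul, abs_of_pos hpos]
      _ = |A ^ 4 - B ^ 4| := by rw [this]
      _ = |u ^ 2 - v ^ 2| := by rw [hA4, hB4]; ring_nf
  have h2 : |u ^ 2 - v ^ 2| ≤ |u - v| * (A ^ 2 + B ^ 2) := by
    have : |u ^ 2 - v ^ 2| = |u - v| * |u + v| := by
      rw [← abs_mul]; ring_nf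
    rw [this]
    apply mul_le_mul_of_nonneg_left _ (abs_nonneg _)
    calc |u + v| ≤ |u| + |v| := abs_add_le _ _
      _ ≤ A ^ 2 + B ^ 2 := add_le_add hAu hBv
  have h3 : |A - B| * ((A + B) * (A ^ 2 + B ^ 2)) ≤ (|u - v| / 2) * ((A + B) * (A ^ 2 + B ^ 2)) := by
    rw [key]
    calc |u ^ 2 - v ^ 2| ≤ |u - v| * (A ^ 2 + B ^ 2) := h2
      _ ≤ (|u - v| / 2) * ((A + B) * (A ^ 2 + B ^ 2)) := by
          nlinarith [mul_nonneg (abs_nonneg (u - v))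
            (show (0:ℝ) ≤ (A ^ 2 + B ^ 2) * (A + B - 2) by nlinarith)]
  exact le_of_mul_le_mul_right h3 hpos

theorem sqrt_h_diff_le (M K : ℝ) (hK : 0 ≤ K) (p : ℝ → ℝ) (hp : Differentiable ℝ p)
    (hbound : ∀ t, |deriv p t| ≤ K) (x y : ℝ) (hx : x < 0) (hy : 0 < y) :
    |(1 + (-M + deriv p x) ^ 2) ^ ((1 : ℝ) / 4) -
      (1 + (M + deriv p y) ^ 2) ^ ((1 : ℝ) / 4)| ≤ K := by
  have hsq : (-M + deriv p x) ^ 2 = (M - deriv p x) ^ 2 := by ring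
  rw [hsq]
  calc |(1 + (M - deriv p x) ^ 2) ^ ((1:ℝ)/4) - (1 + (M + deriv p y) ^ 2) ^ ((1:ℝ)/4)|
      ≤ |(M - deriv p x) - (M + deriv p y)| / 2 := quarter_lip _ _
    _ ≤ K := by
        have h1 := hbound x
        have h2 := hbound y
        have : |(M - deriv p x) - (M + deriv p y)| = |deriv p x + deriv p y| := by
          rw [← abs_neg]; ring_nf
        rw [this]
        have := abs_add_le (deriv p x) (deriv p y)
        linarith
end

section
/- Let P be a bounded idempotent operator (P² = P) on a complex Hilbert space with P ≠ 0, and let A = P − P*. Then ‖A‖² = ‖P‖² − 1. -/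
/-!
Put `B = P + P* - 1` and `A = P - P*`. For every `x`, `B x = P* x - (x - P x)` and
`x - A x = P* x + (x - P x)` with orthogonal summands, so `‖B x‖² = ‖x - A x‖² = ‖x‖² + ‖A x‖²`
(`A` is skew), whence `‖B‖² = 1 + ‖A‖²`. It remains to see `‖B‖ = ‖P‖`. From `B P = P* P` we get
`‖P‖² ≤ ‖B‖ ‖P‖`. Conversely, splitting `x` along `ran P ⊕ (ran P)ᗮ = ran P ⊕ ker P*` reduces
`‖B x‖ ≤ ‖P‖ ‖x‖` to `‖w‖² + ‖P w‖² ≤ ‖P‖² ‖w‖²` for `w ⊥ ran P`, which comes from testing `P`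
on a suitable combination of `w` and `P w`.
-/

open ContinuousLinearMap RCLike
open scoped InnerProductSpace

section InnerProductSpace

variable {𝕜 E : Type*} [RCLike 𝕜] [NormedAddCommGroup E] [InnerProductSpace 𝕜 E]

theorem norm_add_sq_of_inner_eq_zero {x y : E} (h : ⟪x, y⟫_𝕜 = 0) :
    ‖x + y‖ ^ 2 = ‖x‖ ^ 2 + ‖y‖ ^ 2 := by
  simpa only [sq] using norm_add_sq_eq_norm_sq_add_norm_sq_of_inner_eq_zero x y h

theorem norm_sub_sq_of_inner_eq_zero {x y : E} (h : ⟪x, y⟫_𝕜 = 0) :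
    ‖x - y‖ ^ 2 = ‖x‖ ^ 2 + ‖y‖ ^ 2 := by
  rw [sub_eq_add_neg, ← norm_neg y,
    norm_add_sq_of_inner_eq_zero (𝕜 := 𝕜) (by rw [inner_neg_right, h, neg_zero])]

end InnerProductSpace

theorem one_le_norm_of_isIdempotentElem {R : Type*} [NormedRing R] {p : R}
    (hp : IsIdempotentElem p) (hp0 : p ≠ 0) : 1 ≤ ‖p‖ := by
  have : ‖p‖ * 1 ≤ ‖p‖ * ‖p‖ := by simpa [hp.eq] using norm_mul_le p p
  exact le_of_mul_le_mul_left this (norm_pos_iff.mpr hp0)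

namespace ContinuousLinearMap

section NormedSpace

variable {𝕜 E F G : Type*} [NontriviallyNormedField 𝕜]
  [NormedAddCommGroup E] [NormedSpace 𝕜 E] [NormedAddCommGroup F] [NormedSpace 𝕜 F]
  [NormedAddCommGroup G] [NormedSpace 𝕜 G]

theorem opNorm_sq_le_of_norm_apply_sq_le (T : E →L[𝕜] F) {c : ℝ} (hc : 0 ≤ c)
    (h : ∀ x, ‖T x‖ ^ 2 ≤ c * ‖x‖ ^ 2) : ‖T‖ ^ 2 ≤ c := by
  have hT : ‖T‖ ≤ √c := opNorm_le_bound _ (Real.sqrt_nonneg c) fun x ↦ by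
    rw [← Real.sqrt_sq (norm_nonneg x), ← Real.sqrt_mul hc]
    exact Real.le_sqrt_of_sq_le (h x)
  calc ‖T‖ ^ 2 ≤ √c ^ 2 := by gcongr
    _ = c := Real.sq_sqrt hc

theorem norm_apply_sq_le (T : E →L[𝕜] F) (x : E) : ‖T x‖ ^ 2 ≤ ‖T‖ ^ 2 * ‖x‖ ^ 2 := by
  rw [← mul_pow]
  gcongr
  exact T.le_opNorm x

theorem opNorm_sq_eq_one_add_opNorm_sq [Nontrivial E] {S : E →L[𝕜] F} {T : E →L[𝕜] G}
    (h : ∀ x, ‖S x‖ ^ 2 = ‖x‖ ^ 2 + ‖T x‖ ^ 2) : ‖S‖ ^ 2 = 1 + ‖T‖ ^ 2 := by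
  have hS : ‖S‖ ^ 2 ≤ 1 + ‖T‖ ^ 2 :=
    S.opNorm_sq_le_of_norm_apply_sq_le (by positivity) fun x ↦ by
      linarith [h x, T.norm_apply_sq_le x]
  have one_le : 1 ≤ ‖S‖ ^ 2 := by
    obtain ⟨x, hx⟩ := exists_ne (0 : E)
    have : 1 * ‖x‖ ^ 2 ≤ ‖S‖ ^ 2 * ‖x‖ ^ 2 := by
      linarith [h x, S.norm_apply_sq_le x, sq_nonneg ‖T x‖]
    exact le_of_mul_le_mul_right this (by positivity)
  have hT : ‖T‖ ^ 2 ≤ ‖S‖ ^ 2 - 1 :=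
    T.opNorm_sq_le_of_norm_apply_sq_le (by linarith) fun x ↦ by
      linarith [h x, S.norm_apply_sq_le x]
  linarith

end NormedSpace

variable {𝕜 E : Type*} [RCLike 𝕜] [NormedAddCommGroup E] [InnerProductSpace 𝕜 E]

theorem apply_apply_of_isIdempotentElem {P : E →L[𝕜] E} (hP : IsIdempotentElem P) (x : E) :
    P (P x) = P x :=
  congr($hP x)

theorem norm_sq_add_norm_sq_le_of_isIdempotentElem {P : E →L[𝕜] E} (hP : IsIdempotentElem P)
    (hP0 : P ≠ 0) {w : E} (hw : w ∈ P.rangeᗮ) :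
    ‖w‖ ^ 2 + ‖P w‖ ^ 2 ≤ ‖P‖ ^ 2 * ‖w‖ ^ 2 := by
  set a := ‖w‖ ^ 2
  set b := ‖P w‖ ^ 2 with hb
  have hw_Pw : ⟪w, P w⟫_𝕜 = 0 := inner_eq_zero_symm.mp (hw _ (LinearMap.mem_range_self _ w))
  -- for `y = b w + a P w`, `‖P y‖ ≤ ‖P‖ ‖y‖` is the claim multiplied by `(a + b) b`
  have hy : ‖(b : 𝕜) • w + (a : 𝕜) • P w‖ ^ 2 = a * b * (a + b) := by
    rw [norm_add_sq_of_inner_eq_zero (𝕜 := 𝕜) (by simp [inner_smul_left, inner_smul_right, hw_Pw]),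
      norm_smul, norm_smul, norm_ofReal, norm_ofReal, abs_of_nonneg (by positivity),
      abs_of_nonneg (by positivity)]
    ring
  have hPy : P ((b : 𝕜) • w + (a : 𝕜) • P w) = ((a + b : ℝ) : 𝕜) • P w := by
    rw [map_add, map_smul, map_smul, apply_apply_of_isIdempotentElem hP, ofReal_add, add_smul,
      add_comm]
  have hsq : (a + b) * ((a + b) * b) ≤ ‖P‖ ^ 2 * a * ((a + b) * b) := by
    have := P.norm_apply_sq_le ((b : 𝕜) • w + (a : 𝕜) • P w)
    rw [hPy, hy, norm_smul, norm_ofReal, abs_of_nonneg (by positivity), mul_pow, ← hb] at this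
    linear_combination this
  rcases (show 0 ≤ b by positivity).eq_or_lt with hb0 | hb0
  · rw [← hb0, add_zero]
    exact le_mul_of_one_le_left (by positivity)
      (one_le_pow₀ (one_le_norm_of_isIdempotentElem hP hP0))
  · exact le_of_mul_le_mul_right hsq (by positivity)

variable [CompleteSpace E] {P : E →L[𝕜] E}

theorem inner_adjoint_apply_sub_apply_eq_zero (hP : IsIdempotentElem P) (x y : E) :
    ⟪adjoint P x, y - P y⟫_𝕜 = 0 := by
  rw [adjoint_inner_left, map_sub, apply_apply_of_isIdempotentElem hP y, sub_self,
    inner_zero_right]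

theorem norm_add_adjoint_sub_one_apply_sq_eq_adjoint_add_sub (hP : IsIdempotentElem P) (x : E) :
    ‖(P + adjoint P - 1) x‖ ^ 2 = ‖adjoint P x‖ ^ 2 + ‖x - P x‖ ^ 2 := by
  have hB : (P + adjoint P - 1) x = adjoint P x - (x - P x) := by
    simp only [sub_apply, add_apply, one_apply_eq_self]; abel
  rw [hB, norm_sub_sq_of_inner_eq_zero (inner_adjoint_apply_sub_apply_eq_zero hP x x)]

theorem norm_add_adjoint_sub_one_apply_sq_eq_norm_sq_add_sub_adjoint (hP : IsIdempotentElem P)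
    (x : E) : ‖(P + adjoint P - 1) x‖ ^ 2 = ‖x‖ ^ 2 + ‖(P - adjoint P) x‖ ^ 2 := by
  have hA : x - (P - adjoint P) x = adjoint P x + (x - P x) := by simp only [sub_apply]; abel
  have skew : re ⟪x, (P - adjoint P) x⟫_𝕜 = 0 := by
    rw [sub_apply, inner_sub_right, adjoint_inner_right, map_sub, inner_re_symm, sub_self]
  rw [norm_add_adjoint_sub_one_apply_sq_eq_adjoint_add_sub hP,
    ← norm_add_sq_of_inner_eq_zero (inner_adjoint_apply_sub_apply_eq_zero hP x x), ← hA,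
    norm_sub_sq (𝕜 := 𝕜), skew]
  ring

theorem norm_le_norm_add_adjoint_sub_one (hP : IsIdempotentElem P) :
    ‖P‖ ≤ ‖P + adjoint P - 1‖ := by
  have hBP : (P + adjoint P - 1) ∘L P = adjoint P ∘L P := by
    ext x
    simp only [comp_apply, sub_apply, add_apply, one_apply_eq_self,
      apply_apply_of_isIdempotentElem hP x]
    abel
  rcases (norm_nonneg P).eq_or_lt with hP0 | hP0
  · exact hP0 ▸ norm_nonneg _
  refine le_of_mul_le_mul_right ?_ hP0
  calc ‖P‖ * ‖P‖ = ‖(P + adjoint P - 1) ∘L P‖ := by rw [hBP, norm_adjoint_comp_self]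
    _ ≤ ‖P + adjoint P - 1‖ * ‖P‖ := opNorm_comp_le _ _

theorem norm_add_adjoint_sub_one_le (hP : IsIdempotentElem P) (hP0 : P ≠ 0) :
    ‖P + adjoint P - 1‖ ≤ ‖P‖ := by
  have : CompleteSpace P.range := (IsIdempotentElem.isClosed_range hP).completeSpace_coe
  refine (pow_le_pow_iff_left₀ (norm_nonneg _) (norm_nonneg _) two_ne_zero).mp <|
    opNorm_sq_le_of_norm_apply_sq_le _ (by positivity) fun x ↦ ?_
  obtain ⟨u, hu, w, hw, rfl⟩ := P.range.exists_add_mem_mem_orthogonal x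
  have hPu : P u = u := (LinearMap.IsIdempotentElem.mem_range_iff hP.toLinearMap).mp hu
  have hP'w : adjoint P w = 0 := by rwa [orthogonal_range] at hw
  have hx : ‖u + w‖ ^ 2 = ‖u‖ ^ 2 + ‖w‖ ^ 2 :=
    norm_add_sq_of_inner_eq_zero (Submodule.inner_right_of_mem_orthogonal hu hw)
  have hP'x : adjoint P (u + w) = adjoint P u := by rw [map_add, hP'w, add_zero]
  have hQx : u + w - P (u + w) = w - P w := by rw [map_add, hPu]; abel
  have hQw : ‖w - P w‖ ^ 2 = ‖w‖ ^ 2 + ‖P w‖ ^ 2 :=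
    norm_sub_sq_of_inner_eq_zero
      (inner_eq_zero_symm.mp (hw _ (LinearMap.mem_range_self _ w)))
  have hP'u := (adjoint P).norm_apply_sq_le u
  rw [adjoint.norm_map] at hP'u
  rw [norm_add_adjoint_sub_one_apply_sq_eq_adjoint_add_sub hP, hP'x, hQx, hQw, hx]
  linarith [norm_sq_add_norm_sq_le_of_isIdempotentElem hP hP0 hw]

theorem norm_add_adjoint_sub_one (hP : IsIdempotentElem P) (hP0 : P ≠ 0) :
    ‖P + adjoint P - 1‖ = ‖P‖ :=
  (norm_add_adjoint_sub_one_le hP hP0).antisymm (norm_le_norm_add_adjoint_sub_one hP)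

end ContinuousLinearMap

theorem norm_skew_part_of_projection {H : Type*} [NormedAddCommGroup H]
    [InnerProductSpace ℂ H] [CompleteSpace H] (P : H →L[ℂ] H)
    (hP : P ∘L P = P) (hP0 : P ≠ 0) :
    ‖P - ContinuousLinearMap.adjoint P‖ ^ 2 = ‖P‖ ^ 2 - 1 := by
  have hP : IsIdempotentElem P := hP
  have : Nontrivial H := by
    by_contra! h
    exact hP0 (Subsingleton.elim _ _)
  have hB : ‖P + adjoint P - 1‖ ^ 2 = 1 + ‖P - adjoint P‖ ^ 2 :=
    opNorm_sq_eq_one_add_opNorm_sq (norm_add_adjoint_sub_one_apply_sq_eq_norm_sq_add_sub_adjoint hP)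
  rw [norm_add_adjoint_sub_one hP hP0] at hB
  linarith
end

section
/- Let T be a bounded self-adjoint operator on a complex Hilbert space H, θ ∈ ℝ, and à the operator on H × H given by Ã(h₁,h₂) = (e^{−iθ}·T h₂, −e^{iθ}·T h₁). If λ is a nonzero real number such that iλ is an eigenvalue of Ã, then λ or −λ is an eigenvalue of T. -/
open Complex in
lemma sq_eig_aux {H : Type*} [NormedAddCommGroup H]
    [InnerProductSpace ℂ H] (T : H →L[ℂ] H) (lam : ℝ) (h : H) (hne : h ≠ 0)
    (hsq : T (T h) = ((lam : ℂ) * lam) • h) :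
    (∃ w : H, w ≠ 0 ∧ T w = (lam : ℂ) • w) ∨
      (∃ w : H, w ≠ 0 ∧ T w = (-lam : ℂ) • w) := by
  by_cases hw : T h + (lam : ℂ) • h = 0
  · right
    exact ⟨h, hne, by rw [eq_neg_of_add_eq_zero_left hw]; module⟩
  · left
    refine ⟨T h + (lam : ℂ) • h, hw, ?_⟩
    rw [map_add, map_smul, hsq]; module

open Complex in
theorem eigenvalue_of_tilde_A {H : Type*} [NormedAddCommGroup H]
    [InnerProductSpace ℂ H] [CompleteSpace H] (T : H →L[ℂ] H)
    (hT : IsSelfAdjoint T) (θ : ℝ) (A : (H × H) →L[ℂ] (H × H))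
    (hA : ∀ h₁ h₂ : H, A (h₁, h₂) = (exp (-θ * I) • T h₂, -(exp (θ * I) • T h₁)))
    (lam : ℝ) (hlam : lam ≠ 0) (v : H × H) (hv : v ≠ 0)
    (heig : A v = (I * lam) • v) :
    (∃ w : H, w ≠ 0 ∧ T w = (lam : ℂ) • w) ∨
      (∃ w : H, w ≠ 0 ∧ T w = (-lam : ℂ) • w) := by
  obtain ⟨h₁, h₂⟩ := v
  rw [hA h₁ h₂, Prod.smul_mk, Prod.mk.injEq] at heig
  obtain ⟨e1, e2⟩ := heig
  have hne : exp (-θ * I) ≠ 0 := Complex.exp_ne_zero _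
  have hne' : exp (θ * I) ≠ 0 := Complex.exp_ne_zero _
  have hexp : exp (-θ * I) * exp (θ * I) = 1 := by
    rw [← Complex.exp_add]; ring_nf; exact Complex.exp_zero
  -- T h₂ = (I*lam*exp(θ*I)) • h₁
  have t2 : T h₂ = (I * lam * exp (θ * I)) • h₁ := by
    have := congrArg (fun x => (exp (θ * I)) • x) e1
    simp only [smul_smul] at this
    rw [mul_comm (exp (θ*I)) (exp (-θ*I)), hexp, one_smul] at this
    rw [this]; module
  have t1 : T h₁ = (-(I * lam) * exp (-θ * I)) • h₂ := by
    have e2' : exp (θ * I) • T h₁ = -((I * lam) • h₂) := by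
      rw [← e2]; module
    have := congrArg (fun x => (exp (-θ * I)) • x) e2'
    simp only [smul_smul, hexp, one_smul] at this
    rw [this]; module
  have hIl : -(I * lam) * exp (-θ * I) * (I * lam * exp (θ * I)) = (lam : ℂ) * lam := by
    have : (I : ℂ) * I = -1 := Complex.I_mul_I
    linear_combination (-(lam:ℂ)*lam*exp (-θ*I)*exp (θ*I)) * this
      + ((lam:ℂ)*lam) * hexp
  have sq1 : T (T h₁) = ((lam : ℂ) * lam) • h₁ := by
    rw [t1, map_smul, t2, smul_smul, hIl]
  have sq2 : T (T h₂) = ((lam : ℂ) * lam) • h₂ := by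
    rw [t2, map_smul, t1, smul_smul, mul_comm, hIl]
  by_cases hone : h₁ = 0
  · have h2 : h₂ ≠ 0 := fun hh => hv (by simp [hone, hh, Prod.ext_iff])
    exact sq_eig_aux T lam h₂ h2 sq2
  · exact sq_eig_aux T lam h₁ hone sq1
end
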